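/- For a line in the unit square [0,1]² given by n·(x − c) = d where c = (1/2, 1/2) is the center, n is a nonzero normal vector, with m = 1 − ‖n‖_∞/‖n‖₁ and d̄ = d/‖n‖₁, the area f of the region on the side of the line opposite to n is given by the piecewise formula: f = 1 if d̄ ≥ 1/2; f = 1 − (d̄ − 1/2)²/(2m(1−m)) if 1/2 − m < d̄ < 1/2; f = 1/2 + d̄/(1−m) if m − 1/2 ≤ d̄ ≤ 1/2 − m; f = (d̄ + 1/2)²/(2m(1−m)) if −1/2 < d̄ < m − 1/2; and f = 0 if d̄ ≤ −1/2. Moreover 0 ≤ f ≤ 1. -/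

import Mathlib

/-!
Reflecting the square in its axes and swapping the coordinates make both components of `n`
nonnegative with `n₁ ≤ n₂`; scaling `n` to unit `ℓ¹`-norm then turns the line into
`m (x - 1/2) + (1 - m) (y - 1/2) = d̄` with `0 ≤ m ≤ 1/2`. By Fubini the area is
`∫₀¹ clamp₀₁ (h x) dx`, where `h x = (d̄ + 1/2 - m x) / (1 - m)` is the height of the line over `x`.
For `d̄ ≤ -1/2` the integrand vanishes, in the middle range it is `h` itself, and for
`-1/2 < d̄ < m - 1/2` it is `h` up to the point where the line meets the bottom side and `0` after
it. The two remaining ranges follow from the central symmetry `f(d̄) + f(-d̄) = 1`.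
-/

open MeasureTheory Set

def squareCut (a b d : ℝ) : Set (ℝ × ℝ) :=
  {p | p.1 ∈ Icc (0:ℝ) 1 ∧ p.2 ∈ Icc (0:ℝ) 1 ∧ a * (p.1 - 1/2) + b * (p.2 - 1/2) ≤ d}

theorem measurableSet_squareCut (a b d : ℝ) : MeasurableSet (squareCut a b d) :=
  (measurable_fst measurableSet_Icc).inter <| (measurable_snd measurableSet_Icc).inter <|
    measurableSet_le (by fun_prop : Measurable fun p : ℝ × ℝ => a * (p.1 - 1/2) + b * (p.2 - 1/2))
      measurable_const

theorem volume_squareCut_swap (a b d : ℝ) :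
    volume (squareCut b a d) = volume (squareCut a b d) := by
  have h : Prod.swap ⁻¹' squareCut a b d = squareCut b a d := by
    ext p
    simp only [squareCut, mem_preimage, mem_ofPred_eq, Prod.fst_swap, Prod.snd_swap]
    constructor <;> rintro ⟨h1, h2, h3⟩ <;> exact ⟨h2, h1, by linarith⟩
  have hswap : MeasurePreserving (Prod.swap : ℝ × ℝ → ℝ × ℝ) volume volume :=
    Measure.measurePreserving_swap
  rw [← h, hswap.measure_preimage (measurableSet_squareCut a b d).nullMeasurableSet]

theorem volume_squareCut_neg_left (a b d : ℝ) :
    volume (squareCut (-a) b d) = volume (squareCut a b d) := by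
  have hreflect : MeasurePreserving (Prod.map (fun x : ℝ => 1 - x) (id : ℝ → ℝ)) volume volume := by
    rw [Measure.volume_eq_prod]
    exact (Measure.measurePreserving_sub_left volume (1:ℝ)).prod (MeasurePreserving.id volume)
  have h : Prod.map (fun x : ℝ => 1 - x) (id : ℝ → ℝ) ⁻¹' squareCut a b d = squareCut (-a) b d := by
    ext p
    simp only [squareCut, mem_preimage, mem_ofPred_eq, Prod.map_fst, Prod.map_snd, id, mem_Icc]
    constructor <;> rintro ⟨⟨h1, h2⟩, h3, h4⟩ <;>
      exact ⟨⟨by linarith, by linarith⟩, h3, by linarith⟩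
  rw [← h, hreflect.measure_preimage (measurableSet_squareCut a b d).nullMeasurableSet]

theorem volume_squareCut_neg_right (a b d : ℝ) :
    volume (squareCut a (-b) d) = volume (squareCut a b d) := by
  rw [← volume_squareCut_swap, volume_squareCut_neg_left, volume_squareCut_swap]

theorem volume_squareCut_abs (a b d : ℝ) :
    volume (squareCut |a| |b| d) = volume (squareCut a b d) := by
  rcases abs_choice a with ha | ha <;> rcases abs_choice b with hb | hb <;>
    simp only [ha, hb, volume_squareCut_neg_left, volume_squareCut_neg_right]

theorem volume_squareCut_min_max (a b d : ℝ) :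
    volume (squareCut (min |a| |b|) (max |a| |b|) d) = volume (squareCut a b d) := by
  rcases le_total |a| |b| with h | h
  · rw [min_eq_left h, max_eq_right h, volume_squareCut_abs]
  · rw [min_eq_right h, max_eq_left h, volume_squareCut_swap, volume_squareCut_abs]

theorem squareCut_mul {s : ℝ} (hs : 0 < s) (a b d : ℝ) :
    squareCut (s * a) (s * b) (s * d) = squareCut a b d := by
  ext p
  simp only [squareCut, mem_ofPred_eq, mul_assoc, ← mul_add, mul_le_mul_iff_right₀ hs]

def unitClamp (u : ℝ) : ℝ := max 0 (min 1 u)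

theorem unitClamp_nonneg (u : ℝ) : 0 ≤ unitClamp u := le_max_left _ _

theorem unitClamp_of_nonpos {u : ℝ} (hu : u ≤ 0) : unitClamp u = 0 :=
  max_eq_left (min_le_of_right_le hu)

theorem unitClamp_of_mem_Icc {u : ℝ} (hu : u ∈ Icc (0:ℝ) 1) : unitClamp u = u := by
  rw [unitClamp, min_eq_right hu.2, max_eq_right hu.1]

theorem unitClamp_one_sub (u : ℝ) : unitClamp (1 - u) = 1 - unitClamp u := by
  simp only [unitClamp, max_def, min_def]
  split_ifs <;> linarith

theorem continuous_unitClamp : Continuous unitClamp :=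
  continuous_const.max (continuous_const.min continuous_id)

theorem toReal_volume_unitSquare_inter_subgraph {g : ℝ → ℝ} (hg : Continuous g) :
    (volume {p : ℝ × ℝ | p.1 ∈ Icc (0:ℝ) 1 ∧ p.2 ∈ Icc (0:ℝ) 1 ∧ p.2 ≤ g p.1}).toReal
      = ∫ x in (0:ℝ)..1, unitClamp (g x) := by
  set S := {p : ℝ × ℝ | p.1 ∈ Icc (0:ℝ) 1 ∧ p.2 ∈ Icc (0:ℝ) 1 ∧ p.2 ≤ g p.1}
  have hS : MeasurableSet S :=
    (measurable_fst measurableSet_Icc).inter <| (measurable_snd measurableSet_Icc).inter <|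
      measurableSet_le measurable_snd (hg.measurable.comp measurable_fst)
  have hslice (x : ℝ) : volume (Prod.mk x ⁻¹' S)
      = (Icc (0:ℝ) 1).indicator (fun x => ENNReal.ofReal (unitClamp (g x))) x := by
    by_cases hx : x ∈ Icc (0:ℝ) 1
    · have : Prod.mk x ⁻¹' S = Icc 0 (min 1 (g x)) := by
        ext y
        simp [S, hx.1, hx.2, and_assoc]
      rw [this, indicator_of_mem hx, Real.volume_Icc, unitClamp, sub_zero, ENNReal.ofReal_max,
        ENNReal.ofReal_zero, max_eq_right zero_le]
    · have : Prod.mk x ⁻¹' S = ∅ := eq_empty_of_forall_notMem fun y hy => hx hy.1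
      rw [this, indicator_of_notMem hx, measure_empty]
  have hint : IntegrableOn (fun x => unitClamp (g x)) (Icc 0 1) :=
    (continuous_unitClamp.comp hg).integrableOn_Icc
  rw [Measure.volume_eq_prod, Measure.prod_apply hS, funext hslice,
    lintegral_indicator measurableSet_Icc, ← ofReal_integral_eq_lintegral_ofReal hint
      (Filter.Eventually.of_forall fun x => unitClamp_nonneg _),
    ENNReal.toReal_ofReal (setIntegral_nonneg measurableSet_Icc fun x _ => unitClamp_nonneg _),
    integral_Icc_eq_integral_Ioc, ← intervalIntegral.integral_of_le zero_le_one]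

theorem integral_affine (c k a b : ℝ) :
    ∫ x in a..b, (c + k * x) = (b - a) * (c + k * ((a + b) / 2)) := by
  have hint : IntervalIntegrable (fun x => k * x) volume a b :=
    (continuous_const.mul continuous_id).intervalIntegrable _ _
  rw [intervalIntegral.integral_add intervalIntegrable_const hint,
    intervalIntegral.integral_const, intervalIntegral.integral_const_mul, integral_id,
    smul_eq_mul]
  ring

/-- The height over `x` of the line `m (x - 1/2) + (1 - m) (y - 1/2) = t`. -/
noncomputable def cutProfile (m t x : ℝ) : ℝ := (t + 1/2 - m * x) / (1 - m)

noncomputable def cutArea (m t : ℝ) : ℝ := ∫ x in (0:ℝ)..1, unitClamp (cutProfile m t x)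

theorem continuous_cutProfile (m t : ℝ) : Continuous (cutProfile m t) := by
  unfold cutProfile
  fun_prop

theorem integral_cutProfile (m t a b : ℝ) :
    ∫ x in a..b, cutProfile m t x = (b - a) * cutProfile m t ((a + b) / 2) := by
  have h : cutProfile m t = fun x => (t + 1/2) / (1 - m) + (-m / (1 - m)) * x := by
    funext x
    unfold cutProfile
    ring
  rw [h, integral_affine]

theorem cutProfile_neg_one_sub {m : ℝ} (hm : m ≠ 1) (t x : ℝ) :
    cutProfile m (-t) (1 - x) = 1 - cutProfile m t x := by
  have : 1 - m ≠ 0 := sub_ne_zero.2 hm.symm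
  unfold cutProfile
  field_simp
  ring

theorem squareCut_eq_subgraph {m : ℝ} (hm : m < 1) (t : ℝ) :
    squareCut m (1 - m) t
      = {p : ℝ × ℝ | p.1 ∈ Icc (0:ℝ) 1 ∧ p.2 ∈ Icc (0:ℝ) 1 ∧ p.2 ≤ cutProfile m t p.1} := by
  ext p
  simp only [squareCut, cutProfile, mem_ofPred_eq, le_div_iff₀ (sub_pos.2 hm)]
  refine and_congr_right fun _ => and_congr_right fun _ => ?_
  constructor <;> intro h <;> linarith

theorem toReal_volume_squareCut {m : ℝ} (hm : m < 1) (t : ℝ) :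
    (volume (squareCut m (1 - m) t)).toReal = cutArea m t := by
  rw [squareCut_eq_subgraph hm,
    toReal_volume_unitSquare_inter_subgraph (continuous_cutProfile m t), cutArea]

theorem one_sub_max_div_add {x y : ℝ} (h : x + y ≠ 0) :
    1 - max x y / (x + y) = min x y / (x + y) := by
  rw [eq_div_iff h, sub_mul, div_mul_cancel₀ _ h]
  linarith [min_add_max x y]

theorem one_sub_max_div_add_mem_Icc {x y : ℝ} (hx : 0 ≤ x) (hy : 0 ≤ y) (hxy : 0 < x + y) :
    1 - max x y / (x + y) ∈ Icc 0 (1/2) := by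
  rw [one_sub_max_div_add hxy.ne', mem_Icc, div_le_iff₀ hxy]
  exact ⟨div_nonneg (le_min hx hy) hxy.le,
    by linarith [min_le_max (a := x) (b := y), min_add_max x y]⟩

theorem abs_add_abs_pos {a b : ℝ} (h : (a, b) ≠ (0, 0)) : 0 < |a| + |b| := by
  have : a ≠ 0 ∨ b ≠ 0 := by
    contrapose! h
    rw [h.1, h.2]
  rcases this with ha | hb
  · exact add_pos_of_pos_of_nonneg (abs_pos.2 ha) (abs_nonneg b)
  · exact add_pos_of_nonneg_of_pos (abs_nonneg a) (abs_pos.2 hb)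

theorem toReal_volume_squareCut_eq_cutArea {a b : ℝ} (h : (a, b) ≠ (0, 0)) (d : ℝ) :
    (volume (squareCut a b d)).toReal
      = cutArea (1 - max |a| |b| / (|a| + |b|)) (d / (|a| + |b|)) := by
  have hs := abs_add_abs_pos h
  have hm := one_sub_max_div_add_mem_Icc (abs_nonneg a) (abs_nonneg b) hs
  have hmin : (|a| + |b|) * (1 - max |a| |b| / (|a| + |b|)) = min |a| |b| := by
    rw [one_sub_max_div_add hs.ne', mul_div_cancel₀ _ hs.ne']
  have hmax : (|a| + |b|) * (1 - (1 - max |a| |b| / (|a| + |b|))) = max |a| |b| := by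
    rw [sub_sub_cancel, mul_div_cancel₀ _ hs.ne']
  rw [← toReal_volume_squareCut (by linarith [hm.2]), ← squareCut_mul hs (1 - _), hmin, hmax,
    mul_div_cancel₀ _ hs.ne', volume_squareCut_min_max]

theorem cutArea_nonneg (m t : ℝ) : 0 ≤ cutArea m t :=
  intervalIntegral.integral_nonneg zero_le_one fun _ _ => unitClamp_nonneg _

/-- The point reflection `x ↦ 1 - x`, `y ↦ 1 - y` exchanges the two sides of the line. -/
theorem cutArea_add_cutArea_neg {m : ℝ} (hm : m ≠ 1) (t : ℝ) :
    cutArea m t + cutArea m (-t) = 1 := by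
  have hreflect : cutArea m (-t) = ∫ x in (0:ℝ)..1, (1 - unitClamp (cutProfile m t x)) := by
    have h := intervalIntegral.integral_comp_sub_left
      (fun x => unitClamp (cutProfile m (-t) x)) (a := 0) (b := 1) 1
    rw [sub_self, sub_zero] at h
    simp only [cutArea, ← h, cutProfile_neg_one_sub hm, unitClamp_one_sub]
  have hint : IntervalIntegrable (fun x => unitClamp (cutProfile m t x)) volume 0 1 :=
    (continuous_unitClamp.comp (continuous_cutProfile m t)).intervalIntegrable _ _
  rw [hreflect, intervalIntegral.integral_sub intervalIntegrable_const hint, cutArea]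
  simp

theorem cutArea_of_le_neg_half {m t : ℝ} (hm0 : 0 ≤ m) (hm1 : m < 1) (ht : t ≤ -(1/2)) :
    cutArea m t = 0 := by
  rw [cutArea, intervalIntegral.integral_congr (g := fun _ => 0), intervalIntegral.integral_zero]
  intro x hx
  rw [uIcc_of_le zero_le_one] at hx
  refine unitClamp_of_nonpos (div_nonpos_of_nonpos_of_nonneg ?_ (sub_pos.2 hm1).le)
  nlinarith [mul_nonneg hm0 hx.1]

theorem cutArea_of_mem_middle {m t : ℝ} (hm0 : 0 ≤ m) (h1 : m - 1/2 ≤ t) (h2 : t ≤ 1/2 - m) :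
    cutArea m t = 1/2 + t / (1 - m) := by
  have hm1 : 0 < 1 - m := by linarith
  rw [cutArea, intervalIntegral.integral_congr (g := cutProfile m t), integral_cutProfile]
  · unfold cutProfile
    field_simp
    ring
  intro x hx
  rw [uIcc_of_le zero_le_one] at hx
  have hmx : m * x ≤ m := mul_le_of_le_one_right hm0 hx.2
  refine unitClamp_of_mem_Icc ⟨div_nonneg ?_ hm1.le, (div_le_one hm1).2 ?_⟩ <;>
    nlinarith [mul_nonneg hm0 hx.1]

theorem cutArea_of_lt {m t : ℝ} (hm : m ≤ 1/2) (h1 : -(1/2) < t) (h2 : t < m - 1/2) :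
    cutArea m t = (t + 1/2) ^ 2 / (2 * m * (1 - m)) := by
  have hm0 : 0 < m := by linarith
  have hm1 : 0 < 1 - m := by linarith
  -- the line meets the bottom side of the square at `x₁`
  obtain ⟨x₁, hx₁⟩ : ∃ x₁, x₁ = (t + 1/2) / m := ⟨_, rfl⟩
  have hx₁0 : 0 ≤ x₁ := hx₁ ▸ div_nonneg (by linarith) hm0.le
  have hx₁1 : x₁ ≤ 1 := hx₁ ▸ (div_le_one hm0).2 (by linarith)
  have hmx₁ : m * x₁ = t + 1/2 := by rw [hx₁, mul_div_cancel₀ _ hm0.ne']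
  have hint (a b : ℝ) : IntervalIntegrable (fun x => unitClamp (cutProfile m t x)) volume a b :=
    (continuous_unitClamp.comp (continuous_cutProfile m t)).intervalIntegrable _ _
  have hleft : ∫ x in (0:ℝ)..x₁, unitClamp (cutProfile m t x)
      = ∫ x in (0:ℝ)..x₁, cutProfile m t x := by
    refine intervalIntegral.integral_congr fun x hx => ?_
    rw [uIcc_of_le hx₁0] at hx
    have : m * x ≤ m * x₁ := mul_le_mul_of_nonneg_left hx.2 hm0.le
    refine unitClamp_of_mem_Icc ⟨div_nonneg ?_ hm1.le, (div_le_one hm1).2 ?_⟩ <;>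
      nlinarith [mul_nonneg hm0.le hx.1]
  have hright : ∫ x in x₁..1, unitClamp (cutProfile m t x) = 0 := by
    refine (intervalIntegral.integral_congr (g := fun _ => 0) fun x hx => ?_).trans
      intervalIntegral.integral_zero
    rw [uIcc_of_le hx₁1] at hx
    have : m * x₁ ≤ m * x := mul_le_mul_of_nonneg_left hx.1 hm0.le
    exact unitClamp_of_nonpos (div_nonpos_of_nonpos_of_nonneg (by linarith) hm1.le)
  rw [cutArea, ← intervalIntegral.integral_add_adjacent_intervals (hint 0 x₁) (hint x₁ 1), hleft,
    hright, add_zero, integral_cutProfile, cutProfile, hx₁]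
  field_simp
  ring

/-- Piecewise formula for the area cut off a unit square by a line
`n · (x - (1/2,1/2)) = d`, in terms of `m = 1 - ‖n‖∞/‖n‖₁` and `d̄ = d/‖n‖₁`,
together with the bound `0 ≤ f ≤ 1`. -/
theorem vof_unit_cell_area_formula (n1 n2 d : ℝ) (hn : (n1, n2) ≠ (0, 0)) :
    let f : ℝ := (volume {p : ℝ × ℝ | p.1 ∈ Set.Icc (0:ℝ) 1 ∧ p.2 ∈ Set.Icc (0:ℝ) 1 ∧
      n1 * (p.1 - 1/2) + n2 * (p.2 - 1/2) ≤ d}).toReal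
    let m : ℝ := 1 - max |n1| |n2| / (|n1| + |n2|)
    let db : ℝ := d / (|n1| + |n2|)
    (1/2 ≤ db → f = 1) ∧
    (1/2 - m < db → db < 1/2 → f = 1 - (db - 1/2)^2 / (2 * m * (1 - m))) ∧
    (m - 1/2 ≤ db → db ≤ 1/2 - m → f = 1/2 + db / (1 - m)) ∧
    (-(1/2) < db → db < m - 1/2 → f = (db + 1/2)^2 / (2 * m * (1 - m))) ∧
    (db ≤ -(1/2) → f = 0) ∧
    0 ≤ f ∧ f ≤ 1 := by
  intro f m db
  obtain ⟨hm0, hm⟩ : m ∈ Icc 0 (1/2) :=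
    one_sub_max_div_add_mem_Icc (abs_nonneg n1) (abs_nonneg n2) (abs_add_abs_pos hn)
  have hf : f = cutArea m db := toReal_volume_squareCut_eq_cutArea hn d
  have hsymm : cutArea m db + cutArea m (-db) = 1 := cutArea_add_cutArea_neg (by linarith) db
  rw [hf]
  refine ⟨fun h => ?_, fun h1 h2 => ?_, cutArea_of_mem_middle hm0, cutArea_of_lt hm,
    cutArea_of_le_neg_half hm0 (by linarith), cutArea_nonneg m db, ?_⟩
  · linarith [cutArea_of_le_neg_half hm0 (by linarith) (neg_le_neg h : -db ≤ -(1/2))]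
  · rw [cutArea_of_lt (t := -db) hm (by linarith) (by linarith)] at hsymm
    linear_combination hsymm
  · linarith [cutArea_nonneg m (-db)]
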